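/- arXiv:math/0007054 — 4 statements merged into one kernel-verified Lean document; each statement's English description precedes it below -/
import Mathlib

section
/- Let V be a vector space over ℂ, c ∈ ℂ, and let (L_n)_{n∈ℤ} be endomorphisms of V satisfying the Virasoro relations [L_n, L_m] = (n−m)·L_{n+m} + ((n³−n)/12)·δ_{n+m,0}·c·id for all n, m ∈ ℤ. Then for all p, q ∈ ℤ: ∑_{i=0}^{4} (−1)^i · binom(4,i) · [L_{p+4−i}, L_{q+i}] = 0; i.e., all coefficients of (z−w)⁴·[T(z), T(w)] vanish, where T(z) = ∑_n L_n z^{−n−2}, so the Virasoro field T(z) is local with itself of order 4. -/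
/-- If endomorphisms `L_n` of a complex vector space satisfy the Virasoro relations
`[L_n, L_m] = (n-m) L_{n+m} + ((n³-n)/12) δ_{n+m,0} c id`, then
`∑_{i=0}^{4} (-1)^i binom(4,i) [L_{p+4-i}, L_{q+i}] = 0` for all `p, q`, i.e., all
coefficients of `(z-w)⁴ [T(z), T(w)]` vanish: the Virasoro field
`T(z) = ∑ L_n z^{-n-2}` is local with itself of order 4. -/
theorem virasoro_field_self_local (V : Type*) [AddCommGroup V] [Module ℂ V] (c : ℂ)
    (L : ℤ → Module.End ℂ V)
    (hL : ∀ n m : ℤ, L n * L m - L m * L n =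
      ((n - m : ℤ) : ℂ) • L (n + m) +
        (if n + m = 0 then ((((n : ℂ) ^ 3 - (n : ℂ)) / 12) * c) • (1 : Module.End ℂ V)
          else 0)) :
    ∀ p q : ℤ,
      ∑ i ∈ Finset.range 5, ((-1 : ℂ) ^ i * (Nat.choose 4 i : ℂ)) •
        (L (p + 4 - (i : ℤ)) * L (q + (i : ℤ)) - L (q + (i : ℤ)) * L (p + 4 - (i : ℤ))) = 0 := by
  intro p q
  have key : ∀ i : ℤ, p + 4 - i + (q + i) = p + q + 4 := by intro i; ring
  simp only [Finset.sum_range_succ, Finset.sum_range_zero, hL, key]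
  norm_num [Nat.choose]
  by_cases h : p + q + 4 = 0
  · simp only [h, if_pos rfl]
    have hq : (q : ℂ) = -(p : ℂ) - 4 := by
      have := congrArg (Int.cast : ℤ → ℂ) h
      push_cast at this
      linear_combination this
    push_cast [hq]
    module
  · simp only [if_neg h]
    module
end

section
/- Let M be a vector space over ℚ, let N ≥ 1, and let a : ℤ × ℤ → M be a function satisfying ∑_{i=0}^{N} (−1)^i·binom(N,i)·a(m+N−i, n+i) = 0 for all m, n ∈ ℤ (i.e., (z−w)^N annihilates the formal distribution A(z,w) = ∑ a(m,n)zᵐwⁿ). Then there exist unique functions c_0, c_1, …, c_{N−1} : ℤ → M such that for all p, q ∈ ℤ: a(p,q) = ∑_{j=0}^{N−1} (∏_{i=1}^{j} (−p−i)) · c_j(p+q+1+j). Conversely any a of this form is annihilated by (z−w)^N. In other words, the annihilator of multiplication by (z−w)^N on M-valued formal distributions equals ⊕_{j=0}^{N−1} M[[w^{±1}]]·∂_w^j δ(z−w), where δ(z−w) = ∑_{m∈ℤ} wᵐ z^{−m−1}. -/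
open Finset fwdDiff Function

namespace DeltaAux

/-- Falling-factorial basis polynomial `Q j p = ∏_{i<j} (-p-1-i)` as a rational. -/
def Q (j : ℕ) (p : ℤ) : ℚ := ∏ i ∈ Finset.range j, ((-p - 1 - (i : ℤ) : ℤ) : ℚ)

lemma Q_eq_Icc (j : ℕ) (p : ℤ) :
    (∏ i ∈ Finset.Icc (1:ℕ) j, ((-p - (i : ℤ) : ℤ) : ℚ)) = Q j p := by
  rw [Q, show Finset.Icc (1:ℕ) j = Finset.Ico 1 (j+1) by rw [Finset.Ico_add_one_right_eq_Icc],
    Finset.prod_Ico_eq_prod_range]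
  simp only [Nat.add_sub_cancel]
  refine Finset.prod_congr rfl fun i _ => ?_
  push_cast; ring_nf

lemma Q_eval_zero {k j : ℕ} (h : k < j) : Q j (-(k:ℤ)-1) = 0 :=
  Finset.prod_eq_zero (Finset.mem_range.mpr h) (by push_cast; ring)

lemma Q_eval_diag (k : ℕ) : Q k (-(k:ℤ)-1) = (Nat.factorial k : ℚ) := by
  rw [Q, ← Finset.prod_range_reflect]
  have : ∀ i ∈ Finset.range k,
      ((-(-(k:ℤ)-1) - 1 - ((k - 1 - i : ℕ) : ℤ) : ℤ) : ℚ) = (((i+1 : ℕ) : ℤ) : ℚ) := by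
    intro i hi
    rw [Finset.mem_range] at hi
    have : ((k - 1 - i : ℕ) : ℤ) = (k:ℤ) - 1 - i := by omega
    rw [this]; push_cast; ring
  rw [Finset.prod_congr rfl this]
  norm_cast
  exact_mod_cast Finset.prod_range_add_one_eq_factorial k

lemma Q_succ_top (j : ℕ) (p : ℤ) : Q (j+1) p = Q j p * (-(p:ℚ) - 1 - (j:ℚ)) := by
  simp only [Q, Finset.prod_range_succ]; push_cast; ring

lemma Q_succ_bot (j : ℕ) (p : ℤ) : Q (j+1) p = (-(p:ℚ) - 1) * Q j (p+1) := by
  simp only [Q, Finset.prod_range_succ']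
  have : ∀ i ∈ Finset.range j,
      ((-p - 1 - ((i+1 : ℕ) : ℤ) : ℤ) : ℚ) = ((-(p+1) - 1 - (i : ℤ) : ℤ) : ℚ) := by
    intro i _; push_cast; ring
  rw [Finset.prod_congr rfl this]; push_cast; ring

lemma fwdDiff_comp_shift {G : Type*} [AddCommGroup G] (f : ℤ → G) (c : ℤ) :
    fwdDiff (1:ℤ) (fun p => f (p + c)) = fun p => fwdDiff (1:ℤ) f (p + c) := by
  funext p
  simp only [fwdDiff]
  rw [show p + 1 + c = p + c + 1 by ring]

lemma fwdDiff_iter_comp_shift {G : Type*} [AddCommGroup G] (f : ℤ → G) (c : ℤ) (n : ℕ) :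
    (fwdDiff (1:ℤ))^[n] (fun p => f (p + c)) = fun p => (fwdDiff (1:ℤ))^[n] f (p + c) := by
  induction n generalizing f with
  | zero => rfl
  | succ n ih => rw [iterate_succ_apply, iterate_succ_apply, fwdDiff_comp_shift, ih]

lemma fwdDiff_iter_zero_fun {G : Type*} [AddCommGroup G] (n : ℕ) :
    (fwdDiff (1:ℤ))^[n] (0 : ℤ → G) = 0 := by
  induction n with
  | zero => rfl
  | succ n ih =>
    rw [iterate_succ_apply, show fwdDiff (1:ℤ) (0 : ℤ → G) = 0 from funext fun p => sub_self _, ih]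

lemma Q_fwdDiff_succ (j : ℕ) :
    fwdDiff (1:ℤ) (Q (j+1)) = fun p => (-(j:ℚ)-1) * Q j (p+1) := by
  funext p
  show Q (j+1) (p+1) - Q (j+1) p = _
  rw [Q_succ_top j (p+1), Q_succ_bot j p]; push_cast; ring

lemma Q_iter_self (j : ℕ) : (fwdDiff (1:ℤ))^[j+1] (Q j) = 0 := by
  induction j with
  | zero =>
    rw [show Q 0 = fun _ => (1:ℚ) from funext fun p => by simp [Q], iterate_one, fwdDiff_const]
    rfl
  | succ j ih =>
    rw [iterate_succ_apply, Q_fwdDiff_succ]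
    have h1 : (fun p => (-(j:ℚ)-1) * Q j (p+1)) = (-(j:ℚ)-1) • fun p => Q j (p+1) := rfl
    rw [h1, fwdDiff_iter_const_smul, fwdDiff_iter_comp_shift, ih]
    funext p; simp

lemma Q_iter_ge {j n : ℕ} (h : j < n) : (fwdDiff (1:ℤ))^[n] (Q j) = 0 := by
  have hn : n = (n - (j+1)) + (j+1) := by omega
  rw [hn, Function.iterate_add_apply, Q_iter_self, fwdDiff_iter_zero_fun]

lemma iter_smul_const {M : Type*} [AddCommGroup M] [Module ℚ M]
    (g : ℤ → ℚ) (v : M) (n : ℕ) :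
    (fwdDiff (1:ℤ))^[n] (fun p => g p • v) = fun p => ((fwdDiff (1:ℤ))^[n] g p) • v := by
  induction n generalizing g with
  | zero => rfl
  | succ n ih =>
    rw [iterate_succ_apply, iterate_succ_apply,
      show fwdDiff (1:ℤ) (fun p => g p • v) = fun p => (fwdDiff (1:ℤ) g p) • v from
        funext fun p => (sub_smul _ _ _).symm, ih]

lemma sum_eq_iter {M : Type*} [AddCommGroup M] [Module ℚ M] (f : ℤ → M) (n : ℕ) (m : ℤ) :
    ∑ i ∈ Finset.range (n+1), ((-1:ℚ)^i * (n.choose i : ℚ)) • f (m + (n:ℤ) - (i:ℤ))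
      = (fwdDiff (1:ℤ))^[n] f m := by
  rw [fwdDiff_iter_eq_sum_shift, ← Finset.sum_range_reflect]
  refine Finset.sum_congr rfl fun i hi => ?_
  rw [Finset.mem_range] at hi
  have hi' : i ≤ n := by omega
  rw [show n + 1 - 1 - i = n - i by omega, Nat.choose_symm hi',
    show m + (n:ℤ) - ((n - i : ℕ) : ℤ) = m + i • (1:ℤ) by simp only [nsmul_eq_mul, mul_one]; omega,
    ← Int.cast_smul_eq_zsmul ℚ]
  congr 1
  push_cast
  ring

end DeltaAux
section Layer2
namespace DeltaAux
open Finset Function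

variable {M : Type*} [AddCommGroup M] [Module ℚ M]

lemma fwdDiff_iter_sub (f g : ℤ → M) (n : ℕ) :
    (fwdDiff (1:ℤ))^[n] (f - g) = (fwdDiff (1:ℤ))^[n] f - (fwdDiff (1:ℤ))^[n] g := by
  induction n generalizing f g with
  | zero => rfl
  | succ n ih =>
    rw [iterate_succ_apply, iterate_succ_apply, iterate_succ_apply,
      show fwdDiff (1:ℤ) (f - g) = fwdDiff (1:ℤ) f - fwdDiff (1:ℤ) g from
        funext fun p => by simp only [fwdDiff, Pi.sub_apply]; abel, ih]

lemma vanish (n : ℕ) (h : ℤ → M)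
    (H : (fwdDiff (1:ℤ))^[n] h = 0) (H2 : ∀ k < n, h (-(k:ℤ)-1) = 0) : ∀ p, h p = 0 := by
  have Hs : ∀ m : ℤ, ∑ i ∈ Finset.range (n+1),
      ((-1:ℚ)^i * (n.choose i : ℚ)) • h (m + (n:ℤ) - (i:ℤ)) = 0 := by
    intro m; rw [sum_eq_iter, H]; rfl
  have up : ∀ k : ℕ, h (-(n:ℤ) + k) = 0 := by
    intro k
    induction k using Nat.strong_induction_on with
    | _ k ih =>
      by_cases hk : k < n
      · rw [show -(n:ℤ) + (k:ℤ) = -(((n-1-k : ℕ):ℤ)) - 1 by omega]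
        exact H2 (n-1-k) (by omega)
      · have key := Hs ((k:ℤ) - 2*(n:ℤ))
        rw [Finset.sum_range_succ'] at key
        have hz : ∀ i ∈ Finset.range n,
            ((-1:ℚ)^(i+1) * (n.choose (i+1) : ℚ)) •
              h ((k:ℤ) - 2*(n:ℤ) + (n:ℤ) - ((i+1 : ℕ):ℤ)) = 0 := by
          intro i hi
          rw [Finset.mem_range] at hi
          rw [show (k:ℤ) - 2*(n:ℤ) + (n:ℤ) - ((i+1 : ℕ):ℤ) = -(n:ℤ) + ((k-1-i : ℕ):ℤ) by omega,
            ih (k-1-i) (by omega), smul_zero]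
        rw [Finset.sum_congr rfl hz, Finset.sum_const_zero, zero_add] at key
        rw [show -(n:ℤ) + (k:ℤ) = (k:ℤ) - 2*(n:ℤ) + (n:ℤ) - ((0:ℕ):ℤ) by omega]
        simpa using key
  have down : ∀ k : ℕ, h (-1 - (k:ℤ)) = 0 := by
    intro k
    induction k using Nat.strong_induction_on with
    | _ k ih =>
      by_cases hk : k < n
      · rw [show (-1 : ℤ) - (k:ℤ) = -(k:ℤ) - 1 by ring]
        exact H2 k hk
      · have key := Hs (-1 - (k:ℤ))
        rw [Finset.sum_range_succ] at key
        have hz : ∀ i ∈ Finset.range n,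
            ((-1:ℚ)^i * (n.choose i : ℚ)) • h (-1 - (k:ℤ) + (n:ℤ) - (i:ℤ)) = 0 := by
          intro i hi
          rw [Finset.mem_range] at hi
          rw [show (-1:ℤ) - (k:ℤ) + (n:ℤ) - (i:ℤ) = -1 - ((k-n+i : ℕ):ℤ) by omega,
            ih (k-n+i) (by omega), smul_zero]
        rw [Finset.sum_congr rfl hz, Finset.sum_const_zero, zero_add,
          Nat.choose_self, show (-1:ℤ) - (k:ℤ) + (n:ℤ) - ((n:ℕ):ℤ) = -1 - (k:ℤ) by omega] at key
        have hne : ((-1:ℚ)^n * ((1:ℕ):ℚ)) ≠ 0 := by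
          simp
        rcases smul_eq_zero.mp key with h1 | h2
        · exact absurd h1 hne
        · exact h2
  intro p
  rcases le_or_gt (-(n:ℤ)) p with hp | hp
  · rw [show p = -(n:ℤ) + ((p + n).toNat : ℤ) by omega]; exact up _
  · rw [show p = -1 - (((-1 - p).toNat : ℕ) : ℤ) by omega]; exact down _

lemma exists_d (n : ℕ) (f : ℤ → M) :
    ∃ d : ℕ → M, ∀ k < n,
      f (-(k:ℤ)-1) = ∑ j ∈ Finset.range n, Q j (-(k:ℤ)-1) • d j := by
  suffices H : ∀ K : ℕ, ∃ d : ℕ → M, ∀ k, k < K → k < n →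
      f (-(k:ℤ)-1) = ∑ j ∈ Finset.range n, Q j (-(k:ℤ)-1) • d j by
    obtain ⟨d, hd⟩ := H n
    exact ⟨d, fun k hk => hd k hk hk⟩
  intro K
  induction K with
  | zero => exact ⟨0, fun k hk _ => absurd hk (Nat.not_lt_zero k)⟩
  | succ K ih =>
    obtain ⟨d, hd⟩ := ih
    by_cases hK : K < n
    · set v : M := (Nat.factorial K : ℚ)⁻¹ •
        (f (-(K:ℤ)-1) - ∑ j ∈ Finset.range K, Q j (-(K:ℤ)-1) • d j) with hv
      refine ⟨Function.update d K v, fun k hk1 hk2 => ?_⟩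
      by_cases hkK : k < K
      · rw [Finset.sum_congr rfl (g := fun j => Q j (-(k:ℤ)-1) • d j) fun j _ => ?_]
        · exact hd k hkK hk2
        · rcases eq_or_ne j K with rfl | hne
          · simp [Q_eval_zero hkK]
          · simp [Function.update_of_ne hne]
      · have hkK' : k = K := by omega
        subst hkK'
        rw [← Finset.sum_subset (Finset.range_subset_range.mpr (by omega : k + 1 ≤ n))
          (fun j _ hj => by
            rw [Q_eval_zero (by simpa using hj : k < j), zero_smul]),
          Finset.sum_range_succ, Function.update_self, Q_eval_diag,
          Finset.sum_congr rfl (g := fun j => Q j (-(k:ℤ)-1) • d j)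
            (fun j hj => by rw [Function.update_of_ne (by rw [Finset.mem_range] at hj; omega)]),
          hv, smul_inv_smul₀ (by exact_mod_cast Nat.factorial_ne_zero k)]
        abel
    · exact ⟨d, fun k hk1 hk2 => hd k (by omega) hk2⟩

lemma rep (n : ℕ) (f : ℤ → M) (hf : (fwdDiff (1:ℤ))^[n] f = 0) :
    ∃ d : ℕ → M, ∀ p, f p = ∑ j ∈ Finset.range n, Q j p • d j := by
  obtain ⟨d, hd⟩ := exists_d n f
  refine ⟨d, fun p => ?_⟩
  set g : ℤ → M := fun p => f p - ∑ j ∈ Finset.range n, Q j p • d j with hg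
  have hfun : g = f - ∑ j ∈ Finset.range n, (fun p => Q j p • d j) := by
    funext p
    simp only [hg, Pi.sub_apply, Finset.sum_apply]
  have hg1 : (fwdDiff (1:ℤ))^[n] g = 0 := by
    rw [hfun, fwdDiff_iter_sub, hf, fwdDiff_iter_finset_sum]
    rw [Finset.sum_congr rfl (g := fun _ => (0 : ℤ → M)) fun j hj => ?_]
    · simp
    · rw [Finset.mem_range] at hj
      rw [iter_smul_const, Q_iter_ge hj]
      funext x; simp
  have hg2 : ∀ k < n, g (-(k:ℤ)-1) = 0 := by
    intro k hk
    simp only [hg]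
    rw [← hd k hk, sub_self]
  have := vanish n g hg1 hg2 p
  simp only [hg] at this
  exact sub_eq_zero.mp this

lemma unique_e (n : ℕ) (e : ℕ → M)
    (he : ∀ p : ℤ, ∑ j ∈ Finset.range n, Q j p • e j = 0) : ∀ k < n, e k = 0 := by
  intro k
  induction k using Nat.strong_induction_on with
  | _ k ih =>
    intro hk
    have key := he (-(k:ℤ)-1)
    rw [Finset.sum_eq_single_of_mem k (Finset.mem_range.mpr hk) (fun j hj hne => ?_)] at key
    · rw [Q_eval_diag] at key
      rcases smul_eq_zero.mp key with h1 | h2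
      · exact absurd h1 (by exact_mod_cast Nat.factorial_ne_zero k)
      · exact h2
    · rcases lt_or_gt_of_ne hne with h1 | h2
      · rw [ih j h1 (by omega), smul_zero]
      · rw [Q_eval_zero h2, zero_smul]

lemma fin_sum_to_range' {β : Type*} [AddCommMonoid β] (n : ℕ) (g : Fin n → β) (f : ℕ → β)
    (h : ∀ j : Fin n, g j = f (j : ℕ)) :
    ∑ j : Fin n, g j = ∑ j ∈ Finset.range n, f j := by
  rw [Finset.sum_congr rfl fun j _ => h j, Fin.sum_univ_eq_sum_range]

lemma fin_sum_to_range {β : Type*} [AddCommMonoid β] (n : ℕ) (g : Fin n → β) (f : ℕ → β)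
    (h : ∀ (j : ℕ) (hj : j < n), g ⟨j, hj⟩ = f j) :
    ∑ j : Fin n, g j = ∑ j ∈ Finset.range n, f j := by
  rw [← Fin.sum_univ_eq_sum_range]
  exact Finset.sum_congr rfl fun j _ => by rw [← h j j.isLt]

end DeltaAux
end Layer2
section Main
open Finset Function

/-- The annihilator of multiplication by `(z-w)^N` on `M`-valued formal distributions
equals `⊕_{j=0}^{N-1} M[[w^{±1}]]·∂_w^j δ(z-w)`: a distribution `A(z,w) = ∑ a(m,n)zᵐwⁿ`
is killed by `(z-w)^N` iff there are unique `c_0, …, c_{N-1} : ℤ → M` with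
`a(p,q) = ∑_{j<N} (∏_{i=1}^{j}(-p-i)) · c_j(p+q+1+j)`; conversely any such `a` is killed
by `(z-w)^N`. -/
theorem delta_function_annihilator_pow (M : Type*) [AddCommGroup M] [Module ℚ M]
    (N : ℕ) (hN : 1 ≤ N) (a : ℤ → ℤ → M) :
    ((∀ m n : ℤ, ∑ i ∈ Finset.range (N + 1),
        ((-1 : ℚ) ^ i * (N.choose i : ℚ)) • a (m + (N : ℤ) - (i : ℤ)) (n + (i : ℤ)) = 0) →
      ∃! c : Fin N → ℤ → M, ∀ p q : ℤ,
        a p q = ∑ j : Fin N,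
          (∏ i ∈ Finset.Icc (1 : ℕ) (j : ℕ), ((-p - (i : ℤ) : ℤ) : ℚ)) •
            c j (p + q + 1 + ((j : ℕ) : ℤ))) ∧
    (∀ c : Fin N → ℤ → M,
      (∀ p q : ℤ,
        a p q = ∑ j : Fin N,
          (∏ i ∈ Finset.Icc (1 : ℕ) (j : ℕ), ((-p - (i : ℤ) : ℤ) : ℚ)) •
            c j (p + q + 1 + ((j : ℕ) : ℤ))) →
      ∀ m n : ℤ, ∑ i ∈ Finset.range (N + 1),
        ((-1 : ℚ) ^ i * (N.choose i : ℚ)) • a (m + (N : ℤ) - (i : ℤ)) (n + (i : ℤ)) = 0) := by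
  constructor
  · -- forward direction: existence and uniqueness of the c's
    intro H
    have Hf : ∀ t : ℤ, (fwdDiff (1:ℤ))^[N] (fun p => a p (t - p)) = 0 := by
      intro t
      funext m
      rw [← DeltaAux.sum_eq_iter]
      simp only [Pi.zero_apply]
      rw [Finset.sum_congr rfl (g := fun i => ((-1:ℚ)^i * (N.choose i : ℚ)) •
            a (m + (N:ℤ) - (i:ℤ)) ((t - m - (N:ℤ)) + (i:ℤ))) fun i _ => ?_]
      · exact H m (t - m - (N:ℤ))
      · show ((-1:ℚ)^i * (N.choose i : ℚ)) •
            a (m + (N:ℤ) - (i:ℤ)) (t - (m + (N:ℤ) - (i:ℤ))) = _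
        rw [show t - (m + (N:ℤ) - (i:ℤ)) = t - m - (N:ℤ) + (i:ℤ) from by ring]
    have Hrep := fun t : ℤ => DeltaAux.rep N (fun p => a p (t - p)) (Hf t)
    choose D hD using Hrep
    refine ⟨fun j s => D (s - 1 - ((j:ℕ):ℤ)) (j:ℕ), fun p q => ?_, ?_⟩
    · have h1 := hD (p + q) p
      rw [show p + q - p = q from by ring] at h1
      rw [h1]
      refine (DeltaAux.fin_sum_to_range' N _ _ fun j => ?_).symm
      show (∏ i ∈ Finset.Icc (1:ℕ) (j:ℕ), ((-p - (i:ℤ) : ℤ) : ℚ)) •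
          D (p + q + 1 + ((j:ℕ):ℤ) - 1 - ((j:ℕ):ℤ)) (j:ℕ) = DeltaAux.Q (j:ℕ) p • D (p + q) (j:ℕ)
      rw [DeltaAux.Q_eq_Icc, show p + q + 1 + ((j:ℕ):ℤ) - 1 - ((j:ℕ):ℤ) = p + q from by ring]
    · intro c' hc'
      funext j s
      set t : ℤ := s - 1 - ((j:ℕ):ℤ) with ht
      set e : ℕ → M :=
        fun j' => if h : j' < N then c' ⟨j', h⟩ (t + 1 + (j':ℤ)) - D t j' else 0 with he'
      have he : ∀ p : ℤ, ∑ j' ∈ Finset.range N, DeltaAux.Q j' p • e j' = 0 := by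
        intro p
        have h2 := hc' p (t - p)
        rw [DeltaAux.fin_sum_to_range' N _
          (fun j' => DeltaAux.Q j' p •
            (if h : j' < N then c' ⟨j', h⟩ (t + 1 + (j':ℤ)) else 0)) (fun j' => by
              rw [DeltaAux.Q_eq_Icc,
                show p + (t - p) + 1 + ((j':ℕ):ℤ) = t + 1 + ((j':ℕ):ℤ) from by ring]
              simp [j'.isLt])] at h2
        have h3 := hD t p
        have h4 : ∀ j' ∈ Finset.range N, DeltaAux.Q j' p • e j'
            = DeltaAux.Q j' p • (if h : j' < N then c' ⟨j', h⟩ (t + 1 + (j':ℤ)) else 0)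
              - DeltaAux.Q j' p • D t j' := by
          intro j' hj'
          rw [Finset.mem_range] at hj'
          rw [he']
          simp only [dif_pos hj']
          rw [smul_sub]
        rw [Finset.sum_congr rfl h4, Finset.sum_sub_distrib, ← h2, ← h3, sub_self]
      have h5 := DeltaAux.unique_e N e he (j:ℕ) j.isLt
      simp only [he', dif_pos j.isLt, Fin.eta] at h5
      show c' j s = D (s - 1 - ((j:ℕ):ℤ)) (j:ℕ)
      rw [show s = t + 1 + ((j:ℕ):ℤ) from by rw [ht]; ring]
      rw [show t + 1 + ((j:ℕ):ℤ) - 1 - ((j:ℕ):ℤ) = t from by ring]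
      exact sub_eq_zero.mp h5
  · -- converse direction
    intro c hc m n
    have key : ∀ j : ℕ, j < N → ∑ i ∈ Finset.range (N+1),
        ((-1:ℚ)^i * (N.choose i : ℚ)) * DeltaAux.Q j (m + (N:ℤ) - (i:ℤ)) = 0 := by
      intro j hj
      have h0 := DeltaAux.sum_eq_iter (M := ℚ) (DeltaAux.Q j) N m
      rw [DeltaAux.Q_iter_ge hj] at h0
      simpa [smul_eq_mul] using h0
    set F : ℕ → M :=
      fun j => if h : j < N then c ⟨j, h⟩ (m + n + (N:ℤ) + 1 + (j:ℤ)) else 0 with hF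
    have step : ∀ i ∈ Finset.range (N+1),
        ((-1:ℚ)^i * (N.choose i : ℚ)) • a (m + (N:ℤ) - (i:ℤ)) (n + (i:ℤ))
          = ∑ j ∈ Finset.range N,
            (((-1:ℚ)^i * (N.choose i : ℚ)) * DeltaAux.Q j (m + (N:ℤ) - (i:ℤ))) • F j := by
      intro i _
      rw [hc (m + (N:ℤ) - (i:ℤ)) (n + (i:ℤ)),
        DeltaAux.fin_sum_to_range' N _
          (fun j => DeltaAux.Q j (m + (N:ℤ) - (i:ℤ)) • F j) (fun j => by
            rw [DeltaAux.Q_eq_Icc,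
              show (m + (N:ℤ) - (i:ℤ)) + (n + (i:ℤ)) + 1 + ((j:ℕ):ℤ)
                = m + n + (N:ℤ) + 1 + ((j:ℕ):ℤ) from by ring, hF]
            simp only [dif_pos j.isLt, Fin.eta]),
        Finset.smul_sum]
      exact Finset.sum_congr rfl fun j _ => smul_smul _ _ _
    rw [Finset.sum_congr rfl step, Finset.sum_comm]
    rw [Finset.sum_congr rfl (g := fun _ => (0:M)) fun j hj => by
      rw [← Finset.sum_smul, key j (Finset.mem_range.mp hj), zero_smul]]
    exact Finset.sum_const_zero

end Main
end

section
/- Let ρ ∈ ℂ[[t]] be a formal power series with zero constant coefficient and nonzero coefficient of t, regarded as a nonzero element of the field of formal Laurent series ℂ((t)). For a Laurent polynomial h = ∑_n h_n tⁿ ∈ ℂ[t, t⁻¹], set h(ρ) := ∑_n h_n ρⁿ ∈ ℂ((t)), where ρⁿ for n ∈ ℤ is the integer power in the field ℂ((t)). Then Res(h(ρ)·ρ′) = Res(h), where ρ′ denotes the formal derivative of ρ and Res denotes the coefficient of t⁻¹. In particular, the Heisenberg cocycle (f,g) ↦ Res(f·dg) is independent of the choice of formal coordinate: Res(f(ρ)·(g(ρ))′)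 = Res(f·g′) for all Laurent polynomials f, g. -/
/-! The formal derivative is a derivation of the field `ℂ((t))`, so `(ρⁿ)′ = n ρⁿ⁻¹ ρ′` and, for
`n ≠ -1`, `ρⁿ ρ′ = (ρⁿ⁺¹)′ / (n + 1)` is exact, hence has no residue. For `n = -1` write `ρ = t σ`
with `σ` a unit of `ℂ[[t]]`: then `ρ⁻¹ ρ′ = t⁻¹ + σ⁻¹ σ′`, and `σ⁻¹ σ′` is a power series, so the
residue is `1`. The cocycle identity follows from the chain rule `f(ρ) (g(ρ))′ = (f g′)(ρ) ρ′`
together with the first part, applied to `ρ` and to `t`. -/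

/-- The operator multiplying the `n`-th coefficient of a Laurent series by `n`. -/
noncomputable def indexScale (x : LaurentSeries ℂ) : LaurentSeries ℂ :=
  ⟨fun n => (n : ℂ) * x.coeff n,
    x.isPWO_support'.mono (by
      intro n hn
      simp only [Function.mem_support] at hn ⊢
      exact fun h => hn (by rw [h, mul_zero]))⟩

/-- The formal derivative of a Laurent series: `(∑ aₙ tⁿ)' = ∑ n aₙ t^{n-1}`. -/
noncomputable def laurentDeriv (x : LaurentSeries ℂ) : LaurentSeries ℂ :=
  (HahnSeries.single (-1 : ℤ) (1 : ℂ)) * indexScale x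

/-- The residue of a Laurent series: its coefficient of `t⁻¹`. -/
def laurentRes (x : LaurentSeries ℂ) : ℂ := x.coeff (-1)

/-- Evaluation of a Laurent polynomial `h = ∑ hₙ tⁿ` (given by its finitely supported
coefficient function) at a nonzero element `x` of the field `ℂ((t))`:
`h(x) = ∑ hₙ xⁿ`, where `xⁿ` is the integer power in the field of Laurent series. -/
noncomputable def lpEval (h : ℤ →₀ ℂ) (x : LaurentSeries ℂ) : LaurentSeries ℂ :=
  h.sum fun n a => a • x ^ n

lemma Derivation.inv_mul_smul_map_mul {R K M : Type*} [CommSemiring R] [Field K] [Algebra R K]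
    [AddCommGroup M] [Module K M] [Module R M] (D : Derivation R K M) {a b : K} (ha : a ≠ 0)
    (hb : b ≠ 0) : (a * b)⁻¹ • D (a * b) = a⁻¹ • D a + b⁻¹ • D b := by
  rw [D.leibniz, smul_add, smul_smul, smul_smul, add_comm, mul_inv, inv_mul_cancel_right₀ hb,
    mul_comm a⁻¹, inv_mul_cancel_right₀ ha]

open HahnSeries

lemma coeff_indexScale (x : LaurentSeries ℂ) (n : ℤ) :
    (indexScale x).coeff n = n * x.coeff n := rfl

lemma coeff_laurentDeriv (x : LaurentSeries ℂ) (n : ℤ) :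
    (laurentDeriv x).coeff n = ((n : ℂ) + 1) * x.coeff (n + 1) := by
  have h := coeff_single_mul_add (r := (1 : ℂ)) (x := indexScale x) (a := n + 1) (b := -1)
  rw [add_neg_cancel_right, one_mul] at h
  rw [laurentDeriv, h, coeff_indexScale]
  push_cast
  rfl

lemma laurentDeriv_smul (c : ℂ) (x : LaurentSeries ℂ) :
    laurentDeriv (c • x) = c • laurentDeriv x := by
  ext n
  simp only [coeff_laurentDeriv, coeff_smul, smul_eq_mul]
  ring

lemma support_indexScale_subset (x : LaurentSeries ℂ) : (indexScale x).support ⊆ x.support :=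
  fun _ hn hx => hn (by rw [coeff_indexScale, hx, mul_zero])

lemma indexScale_mul (x y : LaurentSeries ℂ) :
    indexScale (x * y) = indexScale x * y + x * indexScale y := by
  ext n
  rw [coeff_add, coeff_indexScale, coeff_mul,
    coeff_mul_left' x.isPWO_support (support_indexScale_subset x),
    coeff_mul_right' y.isPWO_support (support_indexScale_subset y),
    Finset.mul_sum, ← Finset.sum_add_distrib]
  refine Finset.sum_congr rfl fun ij hij => ?_
  obtain ⟨-, -, rfl⟩ := Finset.mem_antidiagonal.mp hij
  simp only [coeff_indexScale]
  push_cast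
  ring

noncomputable def laurentDerivation : Derivation ℂ (LaurentSeries ℂ) (LaurentSeries ℂ) where
  toFun := laurentDeriv
  map_add' x y := by ext n; simp only [coeff_laurentDeriv, coeff_add, mul_add]
  map_smul' c x := by
    -- here `ℂ` acts on `LaurentSeries ℂ` through the algebra map `ℂ⟦X⟧ → ℂ⸨X⸩`
    ext n
    simp only [Algebra.smul_def, algebraMap_apply', PowerSeries.algebraMap_eq, ofPowerSeries_C,
      C_apply, single_zero_mul_eq_smul, coeff_laurentDeriv, coeff_smul, RingHom.id_apply]
    ring
  map_one_eq_zero' := by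
    show laurentDeriv 1 = 0
    ext n
    rw [coeff_laurentDeriv, HahnSeries.coeff_one, HahnSeries.coeff_zero]
    rcases eq_or_ne n (-1) with rfl | hn
    · norm_num
    · rw [if_neg (by omega), mul_zero]
  leibniz' x y := by
    show laurentDeriv (x * y) = x * laurentDeriv y + y * laurentDeriv x
    rw [laurentDeriv, laurentDeriv, laurentDeriv, indexScale_mul]
    ring

@[simp] lemma laurentDerivation_apply (x : LaurentSeries ℂ) :
    laurentDerivation x = laurentDeriv x := rfl

lemma laurentRes_laurentDeriv (x : LaurentSeries ℂ) : laurentRes (laurentDeriv x) = 0 := by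
  rw [laurentRes, coeff_laurentDeriv]
  norm_num

lemma laurentRes_smul (c : ℂ) (x : LaurentSeries ℂ) : laurentRes (c • x) = c * laurentRes x := rfl

lemma laurentRes_add (x y : LaurentSeries ℂ) : laurentRes (x + y) = laurentRes x + laurentRes y :=
  rfl

lemma laurentRes_sum {ι : Type*} (s : Finset ι) (x : ι → LaurentSeries ℂ) :
    laurentRes (∑ i ∈ s, x i) = ∑ i ∈ s, laurentRes (x i) :=
  coeff_sum _

lemma laurentRes_C_mul (c : ℂ) (x : LaurentSeries ℂ) : laurentRes (C c * x) = c * laurentRes x := by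
  rw [C_mul_eq_smul, laurentRes_smul]

lemma laurentRes_coe (p : PowerSeries ℂ) : laurentRes (p : LaurentSeries ℂ) = 0 := by
  rw [laurentRes, PowerSeries.coeff_coe, if_pos (by norm_num)]

lemma laurentDeriv_coe (p : PowerSeries ℂ) :
    laurentDeriv (p : LaurentSeries ℂ) = (PowerSeries.derivative ℂ p : LaurentSeries ℂ) := by
  ext n
  rw [coeff_laurentDeriv, PowerSeries.coeff_coe, PowerSeries.coeff_coe]
  split_ifs with hn1 hn
  · rw [mul_zero]
  · omega
  · rw [show n = -1 by omega]
    norm_num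
  · lift n to ℕ using by omega
    rw [PowerSeries.coeff_derivative, show ((n : ℤ) + 1).natAbs = n + 1 by omega,
      Int.natAbs_natCast]
    push_cast
    ring

lemma laurentRes_zpow_mul_laurentDeriv_of_ne {n : ℤ} (hn : n ≠ -1) (x : LaurentSeries ℂ) :
    laurentRes (x ^ n * laurentDeriv x) = 0 := by
  have hn' : (n : ℂ) + 1 ≠ 0 := by exact_mod_cast (show n + 1 ≠ 0 by omega)
  have key := laurentRes_laurentDeriv (x ^ (n + 1))
  rw [← laurentDerivation_apply, laurentDerivation.leibniz_zpow, add_sub_cancel_right,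
    laurentDerivation_apply, smul_eq_mul, ← Int.cast_smul_eq_zsmul ℂ, laurentRes_smul] at key
  push_cast at key
  exact (mul_eq_zero.mp key).resolve_left hn'

lemma laurentRes_inv_mul_laurentDeriv {ρ : PowerSeries ℂ} (h0 : PowerSeries.constantCoeff ρ = 0)
    (h1 : PowerSeries.coeff 1 ρ ≠ 0) :
    laurentRes ((ρ : LaurentSeries ℂ)⁻¹ * laurentDeriv ρ) = 1 := by
  obtain ⟨σ, rfl⟩ := PowerSeries.X_dvd_iff.mpr h0
  have hσ : PowerSeries.constantCoeff σ ≠ 0 := by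
    rwa [PowerSeries.coeff_succ_X_mul, PowerSeries.coeff_zero_eq_constantCoeff] at h1
  have hσinv : (σ : LaurentSeries ℂ)⁻¹ = (σ⁻¹ : PowerSeries ℂ) :=
    (eq_inv_of_mul_eq_one_left (by
      rw [← PowerSeries.coe_mul, PowerSeries.inv_mul_cancel σ hσ, PowerSeries.coe_one])).symm
  have hσne : (σ : LaurentSeries ℂ) ≠ 0 :=
    (map_ne_zero_iff _ ofPowerSeries_injective).mpr (ne_zero_of_map hσ)
  have hXne : ((PowerSeries.X : PowerSeries ℂ) : LaurentSeries ℂ) ≠ 0 := by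
    rw [PowerSeries.coe_X]
    exact single_ne_zero one_ne_zero
  have hlog := laurentDerivation.inv_mul_smul_map_mul hXne hσne
  simp only [laurentDerivation_apply, smul_eq_mul] at hlog
  rw [PowerSeries.coe_mul, hlog, laurentDeriv_coe, laurentDeriv_coe,
    PowerSeries.derivative_X, PowerSeries.coe_one, hσinv, ← PowerSeries.coe_mul,
    PowerSeries.coe_X, inv_single, mul_one, laurentRes_add, laurentRes_coe, add_zero, inv_one,
    laurentRes, coeff_single_same]

lemma laurentRes_zpow_mul_laurentDeriv {ρ : PowerSeries ℂ} (h0 : PowerSeries.constantCoeff ρ = 0)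
    (h1 : PowerSeries.coeff 1 ρ ≠ 0) (n : ℤ) :
    laurentRes ((ρ : LaurentSeries ℂ) ^ n * laurentDeriv ρ) = if n = -1 then 1 else 0 := by
  split_ifs with hn
  · rw [hn, zpow_neg_one, laurentRes_inv_mul_laurentDeriv h0 h1]
  · exact laurentRes_zpow_mul_laurentDeriv_of_ne hn _

lemma lpEval_eq_linearCombination (h : ℤ →₀ ℂ) (x : LaurentSeries ℂ) :
    lpEval h x = Finsupp.linearCombination ℂ (fun n : ℤ => x ^ n) h :=
  (Finsupp.linearCombination_apply _ _).symm

lemma laurentRes_lpEval_mul_laurentDeriv {ρ : PowerSeries ℂ}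
    (h0 : PowerSeries.constantCoeff ρ = 0) (h1 : PowerSeries.coeff 1 ρ ≠ 0) (h : ℤ →₀ ℂ) :
    laurentRes (lpEval h ρ * laurentDeriv ρ) = h (-1) := by
  rw [lpEval, Finsupp.sum_mul, Finsupp.sum, laurentRes_sum]
  simp only [← C_mul_eq_smul, mul_assoc, laurentRes_C_mul, laurentRes_zpow_mul_laurentDeriv h0 h1,
    mul_ite, mul_one, mul_zero]
  exact Finsupp.sum_ite_self_eq' h (-1)

lemma laurentDeriv_lpEval (h : ℤ →₀ ℂ) (x : LaurentSeries ℂ) :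
    laurentDeriv (lpEval h x) = h.sum fun n a => (n * a) • (x ^ (n - 1) * laurentDeriv x) := by
  rw [lpEval, ← laurentDerivation_apply, map_finsuppSum]
  refine Finsupp.sum_congr fun n _ => ?_
  rw [laurentDerivation_apply, laurentDeriv_smul, ← laurentDerivation_apply,
    laurentDerivation.leibniz_zpow, ← Int.cast_smul_eq_zsmul ℂ, smul_smul, laurentDerivation_apply,
    smul_eq_mul, mul_comm (n : ℂ)]

/-- The Laurent polynomial `f * g'`. -/
noncomputable def lpMulDeriv (f g : ℤ →₀ ℂ) : ℤ →₀ ℂ :=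
  f.sum fun m a => g.sum fun n b => Finsupp.single (m + n - 1) (n * b * a)

lemma lpEval_mul_laurentDeriv_lpEval {x : LaurentSeries ℂ} (hx : x ≠ 0) (f g : ℤ →₀ ℂ) :
    lpEval f x * laurentDeriv (lpEval g x) = lpEval (lpMulDeriv f g) x * laurentDeriv x := by
  rw [laurentDeriv_lpEval, lpEval, Finsupp.sum_mul, lpEval_eq_linearCombination, lpMulDeriv,
    map_finsuppSum, Finsupp.sum_mul]
  refine Finsupp.sum_congr fun m _ => ?_
  rw [Finsupp.mul_sum, map_finsuppSum, Finsupp.sum_mul]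
  refine Finsupp.sum_congr fun n _ => ?_
  rw [Finsupp.linearCombination_single, add_sub_assoc, zpow_add₀ hx]
  simp only [← C_mul_eq_smul, map_mul]
  ring

lemma laurentRes_lpEval_mul_laurentDeriv_lpEval {ρ : PowerSeries ℂ}
    (h0 : PowerSeries.constantCoeff ρ = 0) (h1 : PowerSeries.coeff 1 ρ ≠ 0) (f g : ℤ →₀ ℂ) :
    laurentRes (lpEval f ρ * laurentDeriv (lpEval g ρ)) = lpMulDeriv f g (-1) := by
  have hρ : (ρ : LaurentSeries ℂ) ≠ 0 :=
    (map_ne_zero_iff _ ofPowerSeries_injective).mpr (ne_zero_of_map h1)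
  rw [lpEval_mul_laurentDeriv_lpEval hρ, laurentRes_lpEval_mul_laurentDeriv h0 h1]

/-- Residue is invariant under formal change of coordinate: if `ρ ∈ ℂ[[t]]` has zero
constant coefficient and nonzero coefficient of `t`, then for any Laurent polynomial `h`,
`Res(h(ρ)·ρ') = Res(h)`; in particular the Heisenberg cocycle `(f,g) ↦ Res(f·dg)` is
coordinate-independent: `Res(f(ρ)·(g(ρ))') = Res(f·g')` (here `t` is embedded into
`ℂ((t))` as `HahnSeries.single 1 1`, so `lpEval h (single 1 1)` is `h` itself). -/
theorem residue_coordinate_independent (ρ : PowerSeries ℂ)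
    (h0 : PowerSeries.constantCoeff ρ = 0) (h1 : PowerSeries.coeff 1 ρ ≠ 0) :
    (∀ h : ℤ →₀ ℂ,
      laurentRes (lpEval h (ρ : LaurentSeries ℂ) * laurentDeriv (ρ : LaurentSeries ℂ)) =
        h (-1)) ∧
    (∀ f g : ℤ →₀ ℂ,
      laurentRes (lpEval f (ρ : LaurentSeries ℂ) *
          laurentDeriv (lpEval g (ρ : LaurentSeries ℂ))) =
        laurentRes (lpEval f (HahnSeries.single (1 : ℤ) (1 : ℂ)) *
          laurentDeriv (lpEval g (HahnSeries.single (1 : ℤ) (1 : ℂ))))) := by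
  refine ⟨laurentRes_lpEval_mul_laurentDeriv h0 h1, fun f g => ?_⟩
  rw [← PowerSeries.coe_X, laurentRes_lpEval_mul_laurentDeriv_lpEval h0 h1,
    laurentRes_lpEval_mul_laurentDeriv_lpEval PowerSeries.constantCoeff_X
      (by rw [PowerSeries.coeff_one_X]; exact one_ne_zero)]
end

section
/- Let σ be a ℂ-algebra automorphism of the formal power series ring ℂ[[X]]. Then the power series ρ := σ(X) has zero constant coefficient and nonzero coefficient of X, and σ coincides with the substitution homomorphism by ρ: σ(g) = g(ρ) for every g ∈ ℂ[[X]], where g(ρ) denotes the (well-defined, since ρ has zero constant term) substitution of ρ into g. -/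
/-!
Since `X` is not a unit, neither is `ρ = σ X`, so over a field its constant coefficient vanishes
and `X ∣ ρ`. Writing `g = (trunc (d+1) g) + X^(d+1) * h`, the tail is sent to a multiple of
`ρ^(d+1)`, hence of `X^(d+1)`, while the polynomial part is sent to `∑_{n ≤ d} gₙ ρⁿ`; so the
degree-`d` coefficients of `σ g` and `g(ρ)` agree. In degree one this reads
`(σ g)₁ = g₁ ρ₁`, and taking `g = σ⁻¹ X` shows that `ρ₁` is a unit.
-/

/-- Substitution of a power series `ρ` with zero constant coefficient into a power series
`g`: the coefficient of degree `d` of `g(ρ)` is the degree-`d` coefficient of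
`∑_{n=0}^{d} gₙ ρⁿ` (a finite sum, since `ρⁿ` has no terms of degree `< n` when the
constant coefficient of `ρ` vanishes). -/
noncomputable def psSubst (g ρ : PowerSeries ℂ) : PowerSeries ℂ :=
  PowerSeries.mk fun d =>
    PowerSeries.coeff (R := ℂ) d (∑ n ∈ Finset.range (d + 1), (PowerSeries.coeff (R := ℂ) n g) • ρ ^ n)

open Finset

namespace PowerSeries

variable {R : Type*} [CommRing R]

lemma algHom_coe_trunc {A : Type*} [Semiring A] [Algebra R A] (φ : R⟦X⟧ →ₐ[R] A) (n : ℕ)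
    (f : R⟦X⟧) :
    φ (trunc n f) = ∑ i ∈ range n, coeff i f • φ X ^ i := by
  rw [← Polynomial.eval₂_C_X_eq_coe, eval₂_trunc_eq_sum_range, map_sum]
  simp only [map_mul, map_pow, ← algebraMap_eq, AlgHom.commutes, Algebra.smul_def]

lemma exists_algHom_apply_eq_sum_add_X_pow_mul (φ : R⟦X⟧ →ₐ[R] R⟦X⟧)
    (hφ : constantCoeff (φ X) = 0) (n : ℕ) (f : R⟦X⟧) :
    ∃ h, φ f = ∑ i ∈ range n, coeff i f • φ X ^ i + X ^ n * h := by
  obtain ⟨u, hu⟩ := pow_dvd_pow_of_dvd (X_dvd_iff.mpr hφ) n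
  refine ⟨u * φ (mk fun i ↦ coeff (i + n) f), ?_⟩
  conv_lhs => rw [eq_X_pow_mul_shift_add_trunc n f]
  rw [map_add, map_mul, map_pow, hu, algHom_coe_trunc, add_comm, mul_assoc]

lemma coeff_algHom_apply (φ : R⟦X⟧ →ₐ[R] R⟦X⟧) (hφ : constantCoeff (φ X) = 0)
    (d : ℕ) (f : R⟦X⟧) :
    coeff d (φ f) = coeff d (∑ i ∈ range (d + 1), coeff i f • φ X ^ i) := by
  obtain ⟨h, hf⟩ := exists_algHom_apply_eq_sum_add_X_pow_mul φ hφ (d + 1) f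
  rw [hf, map_add, coeff_X_pow_mul', if_neg (by omega), add_zero]

lemma coeff_one_algHom_apply (φ : R⟦X⟧ →ₐ[R] R⟦X⟧) (hφ : constantCoeff (φ X) = 0)
    (f : R⟦X⟧) : coeff 1 (φ f) = coeff 1 f * coeff 1 (φ X) := by
  rw [coeff_algHom_apply φ hφ, sum_range_succ, sum_range_one]
  simp [coeff_one]

lemma isUnit_coeff_one_algEquiv_X (σ : R⟦X⟧ ≃ₐ[R] R⟦X⟧) (hσ : constantCoeff (σ X) = 0) :
    IsUnit (coeff 1 (σ X)) := by
  obtain ⟨f, hf⟩ := σ.surjective X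
  have h1 := coeff_one_algHom_apply σ.toAlgHom hσ f
  rw [AlgEquiv.coe_toAlgHom, hf, coeff_one_X] at h1
  exact .of_mul_eq_one_right _ h1.symm

lemma constantCoeff_algEquiv_X {k : Type*} [Field k] (σ : k⟦X⟧ ≃ₐ[k] k⟦X⟧) :
    constantCoeff (σ X) = 0 := by
  by_contra h
  have hX : IsUnit (X : k⟦X⟧) := by
    simpa using (isUnit_iff_constantCoeff.mpr (Ne.isUnit h)).map σ.symm
  simp [isUnit_iff_constantCoeff] at hX

end PowerSeries

open PowerSeries in
lemma algHom_apply_eq_psSubst (φ : ℂ⟦X⟧ →ₐ[ℂ] ℂ⟦X⟧) (hφ : constantCoeff (φ X) = 0)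
    (g : ℂ⟦X⟧) : φ g = psSubst g (φ X) := by
  ext d
  rw [psSubst, coeff_mk, coeff_algHom_apply φ hφ]

/-- Every `ℂ`-algebra automorphism `σ` of `ℂ[[X]]` is a substitution automorphism:
`ρ := σ(X)` has zero constant coefficient and nonzero coefficient of `X`, and
`σ(g) = g(ρ)` for every `g ∈ ℂ[[X]]`. -/
theorem powerSeries_automorphism_is_substitution
    (σ : PowerSeries ℂ ≃ₐ[ℂ] PowerSeries ℂ) :
    PowerSeries.constantCoeff (R := ℂ) (σ PowerSeries.X) = 0 ∧
    PowerSeries.coeff (R := ℂ) 1 (σ PowerSeries.X) ≠ 0 ∧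
    ∀ g : PowerSeries ℂ, σ g = psSubst g (σ PowerSeries.X) := by
  have hσ := PowerSeries.constantCoeff_algEquiv_X σ
  exact ⟨hσ, (PowerSeries.isUnit_coeff_one_algEquiv_X σ hσ).ne_zero,
    algHom_apply_eq_psSubst σ.toAlgHom hσ⟩
end
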